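/- (Theorem 2, sufficient condition, Ψ⁺ branch) Let B be a real n×m matrix, C a real m×n matrix, and let 𝒟 = {Δ ∈ ℝ^m : Δⱼ⁻ ≤ Δⱼ ≤ Δⱼ⁺ for all j} with 0 ≤ Δⱼ⁻ ≤ Δⱼ⁺. Let J₂, J₄ be real symmetric n×n matrices with J₄ negative semidefinite and J₂ + κ̄² J₄ negative definite for some κ̄ > 0. Write J(Δ,κ) = B·diag(Δ)·C + κ² J₂ + κ⁴ J₄. Assume that for every Δ ∈ 𝒟, the characteristic polynomial of B·diag(Δ)·C has 0 as a root of multiplicity exactly one and all its other complex roots have negative real part. If there exists Δ* ∈ 𝒟 such that the function κ ↦ det(−J(Δ*,κ)) is initially positive (Ψ⁺ initially positive), and there exists κ₂ > 0 such that det(−J(Δ,κ₂)) < 0 for all Δ ∈ 𝒟 (Ψ⁺ has a negative sign change), then Δ* exhibits microphase separation. -/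

import Mathlib

open Matrix Polynomial

/-- The combined Jacobian `J(Δ,κ) = B ⬝ diag(Δ) ⬝ C + κ² J₂ + κ⁴ J₄`. -/
noncomputable def Jmat {n m : ℕ} (B : Matrix (Fin n) (Fin m) ℝ) (C : Matrix (Fin m) (Fin n) ℝ)
    (J2 J4 : Matrix (Fin n) (Fin n) ℝ) (Δ : Fin m → ℝ) (κ : ℝ) : Matrix (Fin n) (Fin n) ℝ :=
  B * Matrix.diagonal Δ * C + κ ^ 2 • J2 + κ ^ 4 • J4

/-- Every eigenvalue of the real matrix `M` (root in `ℂ` of its characteristic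
polynomial) has negative real part. -/
def AllEigNegRe {n : ℕ} (M : Matrix (Fin n) (Fin n) ℝ) : Prop :=
  ∀ μ : ℂ, ((M.charpoly).map (algebraMap ℝ ℂ)).IsRoot μ → μ.re < 0

/-- Some eigenvalue of the real matrix `M` has positive real part. -/
def SomeEigPosRe {n : ℕ} (M : Matrix (Fin n) (Fin n) ℝ) : Prop :=
  ∃ μ : ℂ, ((M.charpoly).map (algebraMap ℝ ℂ)).IsRoot μ ∧ 0 < μ.re

/-- The parameter `Δ` exhibits microphase separation: there exist
`0 < κ̂ < κ₁ < κ₂` such that all eigenvalues of `J(Δ,κ)` have negative real part for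
`κ ∈ (0,κ̂)`, some eigenvalue of `J(Δ,κ₁)` has positive real part, and all eigenvalues
of `J(Δ,κ₂)` have negative real part. -/
def Microphase {n m : ℕ} (B : Matrix (Fin n) (Fin m) ℝ) (C : Matrix (Fin m) (Fin n) ℝ)
    (J2 J4 : Matrix (Fin n) (Fin n) ℝ) (Δ : Fin m → ℝ) : Prop :=
  ∃ κhat κ1 κ2 : ℝ, 0 < κhat ∧ κhat < κ1 ∧ κ1 < κ2 ∧
    (∀ κ : ℝ, 0 < κ → κ < κhat → AllEigNegRe (Jmat B C J2 J4 Δ κ)) ∧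
    SomeEigPosRe (Jmat B C J2 J4 Δ κ1) ∧
    AllEigNegRe (Jmat B C J2 J4 Δ κ2)

/-!
For small `κ` the matrix `J(Δ*,κ)` is a perturbation of `A = B ⬝ diag(Δ*) ⬝ C`, whose
characteristic polynomial has a simple root at `0` and all other roots in the open left half
plane. Roots move continuously, so for small `κ` every root with nonnegative real part lies
near `0`. Near `(κ, z, w) = (0, 0, 0)` the divided difference `(p z - p w) / (z - w)` of the
characteristic polynomial is close to its linear coefficient at `κ = 0`, which is positive.
Hence there is at most one root near `0`: it is real (its complex conjugate is also a root),
and a real root `x ≥ 0` would force `p 0 = -x · (divided difference) ≤ 0`, whereas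
`p 0 = det (-J) > 0` by assumption.

At `κ₁` the characteristic polynomial is monic with `p 0 = det (-J) < 0`, so it has a positive
real root. For large `κ` the quadratic form of `J` is dominated by
`κ² (J₂ + κ̄² J₄) + κ² (κ² - κ̄²) J₄`, which is negative definite, and a real matrix with
negative definite quadratic form has all its eigenvalues in the open left half plane.
-/

open Filter Topology

namespace Polynomial

theorem Monic.exists_isRoot_gt_of_eval_neg {p : ℝ[X]} (hp : p.Monic) {a : ℝ}
    (ha : p.eval a < 0) : ∃ t, a < t ∧ p.IsRoot t := by
  have hdeg : 0 < p.degree := hp.degree_pos.2 fun h => by simp [h] at ha; linarith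
  obtain ⟨b, hb, hab⟩ := ((tendsto_atTop_of_leadingCoeff_nonneg p hdeg
    (by simp [hp.leadingCoeff])).eventually_gt_atTop 0 |>.and (eventually_ge_atTop a)).exists
  obtain ⟨t, ht, hroot⟩ := intermediate_value_Ioo hab p.continuous.continuousOn ⟨ha, hb⟩
  exact ⟨t, ht.1, hroot⟩

theorem Monic.coeff_one_pos {p : ℝ[X]} (hp : p.Monic) (hsimple : p.rootMultiplicity 0 = 1)
    (hpos : ∀ t, 0 < t → ¬ p.IsRoot t) : 0 < p.coeff 1 := by
  obtain ⟨q, hpq, hq⟩ := p.exists_eq_pow_rootMultiplicity_mul_and_not_dvd hp.ne_zero 0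
  rw [hsimple, map_zero, sub_zero, pow_one] at hpq
  have hq_monic : q.Monic := monic_X.of_mul_monic_left (hpq ▸ hp)
  rw [dvd_iff_isRoot] at hq
  rw [hpq, coeff_X_mul, coeff_zero_eq_eval_zero]
  by_contra! hq0
  obtain ⟨t, ht, hroot⟩ := hq_monic.exists_isRoot_gt_of_eval_neg (hq0.lt_of_ne hq)
  exact hpos t ht (by rw [hpq]; simp [hroot.eq_zero])

theorem isRoot_map_conj {p : ℝ[X]} {z : ℂ} (h : (p.map (algebraMap ℝ ℂ)).IsRoot z) :
    (p.map (algebraMap ℝ ℂ)).IsRoot (starRingEnd ℂ z) := by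
  simp_all [IsRoot, eval_map_algebraMap, aeval_conj]

section DivDiff

variable {R : Type*} [CommRing R]

noncomputable def divDiff (p : R[X]) (z w : R) : R :=
  p.sum fun i a => a * ∑ j ∈ Finset.range i, z ^ j * w ^ (i - 1 - j)

theorem eval_sub_eval_eq_mul_divDiff (p : R[X]) (z w : R) :
    p.eval z - p.eval w = (z - w) * p.divDiff z w := by
  simp only [eval_eq_sum, divDiff, sum_def, ← Finset.sum_sub_distrib]
  rw [Finset.mul_sum]
  refine Finset.sum_congr rfl fun i _ => ?_
  rw [← mul_sub, ← geom_sum₂_mul]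
  ring

theorem divDiff_zero_zero (p : R[X]) : p.divDiff 0 0 = p.coeff 1 := by
  rw [divDiff, sum_def, Finset.sum_eq_single 1]
  · simp
  · intro i _ hi
    rcases i with _ | _ | i
    · simp
    · exact absurd rfl hi
    · simp [Finset.sum_range_succ', zero_pow (Nat.succ_ne_zero _)]
  · intro h; simp [notMem_support_iff.1 h]

theorem divDiff_eq_sum_range {p : R[X]} {N : ℕ} (hp : p.natDegree < N) (z w : R) :
    p.divDiff z w =
      ∑ i ∈ Finset.range N, p.coeff i * ∑ j ∈ Finset.range i, z ^ j * w ^ (i - 1 - j) :=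
  p.sum_over_range' (f := fun i a => a * ∑ j ∈ Finset.range i, z ^ j * w ^ (i - 1 - j))
    (fun _ => zero_mul _) N hp

end DivDiff

end Polynomial

section PolynomialFamily

variable {α 𝕜 : Type*} [TopologicalSpace α] [NormedField 𝕜] {q : α → 𝕜[X]} {x₀ : α} {N : ℕ}

theorem continuousAt_eval_of_continuousAt_coeff (hdeg : ∀ x, (q x).natDegree ≤ N)
    (hcont : ∀ i, ContinuousAt (fun x => (q x).coeff i) x₀) (z : 𝕜) :
    ContinuousAt (fun y : α × 𝕜 => (q y.1).eval y.2) (x₀, z) := by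
  simp only [fun y : α × 𝕜 => eval_eq_sum_range' (Nat.lt_succ_of_le (hdeg y.1)) y.2]
  have := fun i => (hcont i).comp (continuous_fst.continuousAt (x := (x₀, z)))
  fun_prop

theorem continuousAt_divDiff_of_continuousAt_coeff (hdeg : ∀ x, (q x).natDegree ≤ N)
    (hcont : ∀ i, ContinuousAt (fun x => (q x).coeff i) x₀) (z w : 𝕜) :
    ContinuousAt (fun y : α × 𝕜 × 𝕜 => (q y.1).divDiff y.2.1 y.2.2) (x₀, z, w) := by
  simp only [fun y : α × 𝕜 × 𝕜 => divDiff_eq_sum_range (Nat.lt_succ_of_le (hdeg y.1)) y.2.1 y.2.2]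
  have := fun i => (hcont i).comp (continuous_fst.continuousAt (x := (x₀, z, w)))
  fun_prop

theorem eventually_cauchyBound_lt (hmonic : ∀ x, (q x).Monic) (hdeg : ∀ x, (q x).natDegree = N)
    (hcont : ∀ i, ContinuousAt (fun x => (q x).coeff i) x₀) :
    ∀ᶠ x in 𝓝 x₀, cauchyBound (q x) < cauchyBound (q x₀) + 1 := by
  have hcb : ∀ x, cauchyBound (q x) = (Finset.range N).sup (fun i => ‖(q x).coeff i‖₊) + 1 := by
    intro x; simp [cauchyBound, hdeg, (hmonic x).leadingCoeff]
  have : ContinuousAt (fun x => cauchyBound (q x)) x₀ := by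
    simp only [hcb]
    exact (ContinuousAt.finset_sup_apply fun i _ => (hcont i).nnnorm).add continuousAt_const
  exact this.eventually_lt continuousAt_const (lt_add_one _)

theorem eventually_forall_not_isRoot [ProperSpace 𝕜] (hmonic : ∀ x, (q x).Monic)
    (hdeg : ∀ x, (q x).natDegree = N) (hcont : ∀ i, ContinuousAt (fun x => (q x).coeff i) x₀)
    {F : Set 𝕜} (hF : IsClosed F) (h : ∀ z ∈ F, ¬ (q x₀).IsRoot z) :
    ∀ᶠ x in 𝓝 x₀, ∀ z ∈ F, ¬ (q x).IsRoot z := by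
  have hK : IsCompact (F ∩ Metric.closedBall 0 (cauchyBound (q x₀) + 1)) :=
    (isCompact_closedBall _ _).inter_left hF
  have htube : ∀ᶠ x in 𝓝 x₀, ∀ z ∈ F ∩ Metric.closedBall 0 (cauchyBound (q x₀) + 1),
      (q x).eval z ≠ 0 :=
    hK.eventually_forall_of_forall_eventually fun z hz =>
      (continuousAt_eval_of_continuousAt_coeff (fun x => (hdeg x).le) hcont z).eventually_ne
        (h z hz.1)
  filter_upwards [eventually_cauchyBound_lt hmonic hdeg hcont, htube]
    with x hbound htube z hz hroot
  refine htube z ⟨hz, mem_closedBall_zero_iff.2 ?_⟩ hroot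
  exact_mod_cast ((hroot.norm_lt_cauchyBound (hmonic x).ne_zero).trans hbound).le

end PolynomialFamily

theorem exists_eventually_re_divDiff_pos {α : Type*} [TopologicalSpace α] {q : α → ℂ[X]}
    {x₀ : α} {N : ℕ} (hdeg : ∀ x, (q x).natDegree ≤ N)
    (hcont : ∀ i, ContinuousAt (fun x => (q x).coeff i) x₀) (h₁ : 0 < ((q x₀).coeff 1).re) :
    ∃ ε > 0, ∀ᶠ x in 𝓝 x₀, ∀ z w : ℂ, ‖z‖ < ε → ‖w‖ < ε → 0 < ((q x).divDiff z w).re := by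
  have hpos : ∀ᶠ y in 𝓝 (x₀, (0 : ℂ), (0 : ℂ)), 0 < ((q y.1).divDiff y.2.1 y.2.2).re := by
    refine (Complex.continuous_re.continuousAt.comp
      (continuousAt_divDiff_of_continuousAt_coeff hdeg hcont 0 0)).eventually_const_lt ?_
    simpa [divDiff_zero_zero] using h₁
  rw [nhds_prod_eq, eventually_prod_iff] at hpos
  obtain ⟨P, hP, Q, hQ, hPQ⟩ := hpos
  obtain ⟨ε, hε, hball⟩ := Metric.eventually_nhds_iff.1 hQ
  refine ⟨ε, hε, hP.mono fun x hx z w hz hw => hPQ hx (y := (z, w)) (hball ?_)⟩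
  rw [Prod.dist_eq, dist_zero_right, dist_zero_right]
  exact max_lt hz hw

theorem eventually_forall_re_neg_of_eval_zero_pos {α : Type*} [TopologicalSpace α] {p : α → ℝ[X]}
    {x₀ : α} {N : ℕ} (hmonic : ∀ x, (p x).Monic) (hdeg : ∀ x, (p x).natDegree = N)
    (hcont : ∀ i, ContinuousAt (fun x => (p x).coeff i) x₀)
    (hsimple : ((p x₀).map (algebraMap ℝ ℂ)).rootMultiplicity 0 = 1)
    (hstable : ∀ z, ((p x₀).map (algebraMap ℝ ℂ)).IsRoot z → z ≠ 0 → z.re < 0) :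
    ∀ᶠ x in 𝓝 x₀, 0 < (p x).eval 0 →
      ∀ z : ℂ, ((p x).map (algebraMap ℝ ℂ)).IsRoot z → z.re < 0 := by
  set q : α → ℂ[X] := fun x => (p x).map (algebraMap ℝ ℂ)
  have hqdeg : ∀ x, (q x).natDegree = N := fun x => by rw [natDegree_map, hdeg]
  have hqcont : ∀ i, ContinuousAt (fun x => (q x).coeff i) x₀ := fun i => by
    simp only [q, coeff_map, Complex.coe_algebraMap]
    exact Complex.continuous_ofReal.continuousAt.comp (hcont i)
  have h₁ : 0 < (p x₀).coeff 1 := by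
    refine (hmonic x₀).coeff_one_pos ?_ fun t ht hroot => ?_
    · rwa [eq_rootMultiplicity_map (algebraMap ℝ ℂ).injective, map_zero]
    · have := hstable _ hroot.map (by simpa using ht.ne')
      simp only [Complex.coe_algebraMap, Complex.ofReal_re] at this
      linarith
  obtain ⟨ε, hε, hdd⟩ := exists_eventually_re_divDiff_pos (fun x => (hqdeg x).le) hqcont
    (by simpa [q] using h₁)
  have hsmall : ∀ᶠ x in 𝓝 x₀, ∀ z ∈ {z : ℂ | 0 ≤ z.re ∧ ε ≤ ‖z‖}, ¬ (q x).IsRoot z :=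
    eventually_forall_not_isRoot (fun x => (hmonic x).map _) hqdeg hqcont
      ((isClosed_le continuous_const Complex.continuous_re).inter
        (isClosed_le continuous_const continuous_norm))
      fun z hz hroot => (hstable z hroot (by rintro rfl; simp at hz; linarith)).not_ge hz.1
  filter_upwards [hdd, hsmall] with x hdd hsmall hpos z hz
  by_contra! hre
  have hzε : ‖z‖ < ε := not_le.1 fun h => hsmall z ⟨hre, h⟩ hz
  by_cases him : z.im = 0
  · have key : (p x).eval 0 = -(z.re * ((q x).divDiff 0 z).re) := by
      simpa [q, hz.eq_zero, him, ← coeff_zero_eq_aeval_zero', coeff_zero_eq_eval_zero] using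
        congrArg Complex.re (eval_sub_eval_eq_mul_divDiff (q x) 0 z)
    nlinarith [hdd 0 z (by simpa using hε) hzε]
  · have key := eval_sub_eval_eq_mul_divDiff (q x) z (starRingEnd ℂ z)
    rw [hz.eq_zero, (isRoot_map_conj hz).eq_zero, sub_zero, eq_comm, mul_eq_zero,
      sub_eq_zero] at key
    rcases key with h | h
    · exact him (Complex.conj_eq_iff_im.1 h.symm)
    · simpa [h] using hdd z (starRingEnd ℂ z) hzε (by simpa using hzε)

namespace Matrix

variable {ι : Type*} [Fintype ι]

theorem continuous_charpoly_coeff {R : Type*} [CommRing R] [TopologicalSpace R]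
    [IsTopologicalRing R] [DecidableEq ι] (i : ℕ) :
    Continuous fun M : Matrix ι ι R => M.charpoly.coeff i := by
  have h : ∀ M : Matrix ι ι R, M.charpoly.coeff i =
      MvPolynomial.eval (fun ij : ι × ι => M ij.1 ij.2) ((charpoly.univ R ι).coeff i) :=
    fun M => by
      rw [MvPolynomial.eval, charpoly.univ_coeff_eval₂Hom]
      rfl
  simp only [h]
  exact (MvPolynomial.continuous_eval _).comp (by fun_prop)

theorem exists_mulVec_eq_smul_of_isRoot [DecidableEq ι] {M : Matrix ι ι ℝ} {μ : ℂ}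
    (hμ : (M.charpoly.map (algebraMap ℝ ℂ)).IsRoot μ) :
    ∃ v : ι → ℂ, v ≠ 0 ∧ M.map (algebraMap ℝ ℂ) *ᵥ v = μ • v := by
  have hdet : (scalar ι μ - M.map (algebraMap ℝ ℂ)).det = 0 := by
    rw [← eval_charpoly, charpoly_map]
    exact hμ
  obtain ⟨v, hv, hMv⟩ := exists_mulVec_eq_zero_iff.2 hdet
  refine ⟨v, hv, ?_⟩
  rw [sub_mulVec, sub_eq_zero] at hMv
  simpa [scalar_apply, smul_mulVec] using hMv.symm

theorem re_star_dotProduct_map_mulVec (M : Matrix ι ι ℝ) (v : ι → ℂ) :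
    (star v ⬝ᵥ M.map (algebraMap ℝ ℂ) *ᵥ v).re =
      (fun i => (v i).re) ⬝ᵥ M *ᵥ (fun i => (v i).re) +
        (fun i => (v i).im) ⬝ᵥ M *ᵥ (fun i => (v i).im) := by
  simp only [dotProduct, mulVec, Complex.re_sum, Finset.mul_sum, ← Finset.sum_add_distrib]
  refine Finset.sum_congr rfl fun i _ => Finset.sum_congr rfl fun j _ => ?_
  simp

open scoped ComplexOrder in
theorem re_neg_of_isRoot_of_dotProduct_mulVec_neg [DecidableEq ι] {M : Matrix ι ι ℝ}
    (hM : ∀ x, x ≠ 0 → x ⬝ᵥ M *ᵥ x < 0) {μ : ℂ}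
    (hμ : (M.charpoly.map (algebraMap ℝ ℂ)).IsRoot μ) : μ.re < 0 := by
  obtain ⟨v, hv, hMv⟩ := exists_mulVec_eq_smul_of_isRoot hμ
  have hS : 0 < star v ⬝ᵥ v := dotProduct_star_self_pos_iff.2 hv
  have hre := M.re_star_dotProduct_map_mulVec v
  rw [hMv, dotProduct_smul, smul_eq_mul, Complex.mul_re, ← (Complex.pos_iff.1 hS).2, mul_zero,
    sub_zero] at hre
  have hq : (fun i => (v i).re) ⬝ᵥ M *ᵥ (fun i => (v i).re) +
      (fun i => (v i).im) ⬝ᵥ M *ᵥ (fun i => (v i).im) < 0 := by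
    have hle : ∀ x, x ⬝ᵥ M *ᵥ x ≤ 0 := fun x =>
      (eq_or_ne x 0).elim (fun h => by simp [h]) fun h => (hM x h).le
    by_cases hx : (fun i => (v i).re) = 0
    · have hy : (fun i => (v i).im) ≠ 0 := fun hy =>
        hv (funext fun i => Complex.ext (congrFun hx i) (congrFun hy i))
      linarith [hle fun i => (v i).re, hM _ hy]
    · linarith [hM _ hx, hle fun i => (v i).im]
  exact neg_of_mul_neg_left (hre ▸ hq) (Complex.pos_iff.1 hS).1.le

theorem smul_dotProduct_mulVec_smul (M : Matrix ι ι ℝ) (c : ℝ) (x : ι → ℝ) :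
    (c • x) ⬝ᵥ M *ᵥ (c • x) = c ^ 2 * (x ⬝ᵥ M *ᵥ x) := by
  rw [mulVec_smul, smul_dotProduct, dotProduct_smul, smul_eq_mul, smul_eq_mul]
  ring

theorem dotProduct_mulVec_neg_of_sphere {M : Matrix ι ι ℝ}
    (h : ∀ u ∈ Metric.sphere (0 : ι → ℝ) 1, u ⬝ᵥ M *ᵥ u < 0) (x : ι → ℝ) (hx : x ≠ 0) :
    x ⬝ᵥ M *ᵥ x < 0 := by
  have hx' : 0 < ‖x‖ := norm_pos_iff.2 hx
  have hu : ‖x‖⁻¹ • x ∈ Metric.sphere (0 : ι → ℝ) 1 := by simp [norm_smul, hx'.ne']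
  have hscale := M.smul_dotProduct_mulVec_smul ‖x‖ (‖x‖⁻¹ • x)
  rw [smul_inv_smul₀ hx'.ne'] at hscale
  rw [hscale]
  exact mul_neg_of_pos_of_neg (by positivity) (h _ hu)

theorem eventually_dotProduct_add_smul_add_smul_mulVec_neg (A J₂ J₄ : Matrix ι ι ℝ)
    (h₄ : ∀ x, x ⬝ᵥ J₄ *ᵥ x ≤ 0) {κbar : ℝ}
    (hdef : ∀ x, x ≠ 0 → x ⬝ᵥ (J₂ + κbar ^ 2 • J₄) *ᵥ x < 0) :
    ∀ᶠ κ : ℝ in atTop, ∀ x, x ≠ 0 → x ⬝ᵥ (A + κ ^ 2 • J₂ + κ ^ 4 • J₄) *ᵥ x < 0 := by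
  have hS : IsCompact (Metric.sphere (0 : ι → ℝ) 1) := isCompact_sphere 0 1
  obtain ⟨c, hc, hcK⟩ := hS.exists_forall_le' (f := fun u => -(u ⬝ᵥ (J₂ + κbar ^ 2 • J₄) *ᵥ u))
    (a := 0) (by fun_prop) fun u hu =>
      neg_pos.2 (hdef u (ne_zero_of_mem_sphere one_ne_zero ⟨u, hu⟩))
  obtain ⟨α, hα⟩ := hS.bddAbove_image (f := fun u => u ⬝ᵥ A *ᵥ u) (by fun_prop)
  filter_upwards [(tendsto_pow_atTop two_ne_zero).eventually_gt_atTop (max (κbar ^ 2) (α / c))]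
    with κ hκ
  refine dotProduct_mulVec_neg_of_sphere fun u hu => ?_
  have hA : u ⬝ᵥ A *ᵥ u ≤ α := hα ⟨u, hu, rfl⟩
  have hK := hcK u hu
  have h4 := h₄ u
  have hαc : α < κ ^ 2 * c := (div_lt_iff₀ hc).1 ((le_max_right _ _).trans_lt hκ)
  have hκbar : κbar ^ 2 < κ ^ 2 := (le_max_left _ _).trans_lt hκ
  have hsplit : u ⬝ᵥ (A + κ ^ 2 • J₂ + κ ^ 4 • J₄) *ᵥ u = u ⬝ᵥ A *ᵥ u +
      κ ^ 2 * (u ⬝ᵥ (J₂ + κbar ^ 2 • J₄) *ᵥ u) +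
        κ ^ 2 * (κ ^ 2 - κbar ^ 2) * (u ⬝ᵥ J₄ *ᵥ u) := by
    simp only [add_mulVec, smul_mulVec, dotProduct_add, dotProduct_smul, smul_eq_mul]
    ring
  rw [hsplit]
  nlinarith [mul_nonpos_of_nonneg_of_nonpos (mul_nonneg (sq_nonneg κ) (sub_nonneg.2 hκbar.le)) h4]

end Matrix

theorem eventually_allEigNegRe {n : ℕ} {M₀ : Matrix (Fin n) (Fin n) ℝ}
    (hsimple : (M₀.charpoly.map (algebraMap ℝ ℂ)).rootMultiplicity 0 = 1)
    (hstable : ∀ z, (M₀.charpoly.map (algebraMap ℝ ℂ)).IsRoot z → z ≠ 0 → z.re < 0) :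
    ∀ᶠ M in 𝓝 M₀, 0 < (-M).det → AllEigNegRe M := by
  filter_upwards [eventually_forall_re_neg_of_eval_zero_pos (p := charpoly) charpoly_monic
    charpoly_natDegree_eq_dim (fun i => (continuous_charpoly_coeff i).continuousAt) hsimple hstable]
    with M hM hdet
  exact hM (by simpa [eval_charpoly] using hdet)

theorem someEigPosRe_of_det_neg {n : ℕ} {M : Matrix (Fin n) (Fin n) ℝ} (hdet : (-M).det < 0) :
    SomeEigPosRe M := by
  obtain ⟨t, ht, hroot⟩ := M.charpoly_monic.exists_isRoot_gt_of_eval_neg (a := 0)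
    (by simpa [eval_charpoly] using hdet)
  exact ⟨_, hroot.map, by simpa using ht⟩

theorem allEigNegRe_of_dotProduct_mulVec_neg {n : ℕ} {M : Matrix (Fin n) (Fin n) ℝ}
    (hM : ∀ x, x ≠ 0 → x ⬝ᵥ M *ᵥ x < 0) : AllEigNegRe M :=
  fun _ hμ => re_neg_of_isRoot_of_dotProduct_mulVec_neg hM hμ

theorem stmt11_general (n m : ℕ) (B : Matrix (Fin n) (Fin m) ℝ) (C : Matrix (Fin m) (Fin n) ℝ)
    (Δlo Δhi : Fin m → ℝ)
    (J2 J4 : Matrix (Fin n) (Fin n) ℝ)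
    (hJ4nsd : ∀ x : Fin n → ℝ, x ⬝ᵥ J4.mulVec x ≤ 0)
    (hκbar : ∃ κbar : ℝ, 0 < κbar ∧
      ∀ x : Fin n → ℝ, x ≠ 0 → x ⬝ᵥ (J2 + κbar ^ 2 • J4).mulVec x < 0)
    (hspec : ∀ Δ : Fin m → ℝ, (∀ j, Δlo j ≤ Δ j ∧ Δ j ≤ Δhi j) →
      (((B * Matrix.diagonal Δ * C).charpoly).map (algebraMap ℝ ℂ)).rootMultiplicity 0 = 1 ∧
      (∀ z : ℂ, (((B * Matrix.diagonal Δ * C).charpoly).map (algebraMap ℝ ℂ)).IsRoot z →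
        z ≠ 0 → z.re < 0))
    (Δstar : Fin m → ℝ) (hΔstar : ∀ j, Δlo j ≤ Δstar j ∧ Δstar j ≤ Δhi j)
    (hInitPos : ∃ κhat : ℝ, 0 < κhat ∧ ∀ κ : ℝ, 0 < κ → κ < κhat →
      0 < (-(Jmat B C J2 J4 Δstar κ)).det)
    (hPsiPlusNeg : ∃ κ2 : ℝ, 0 < κ2 ∧ ∀ Δ : Fin m → ℝ,
      (∀ j, Δlo j ≤ Δ j ∧ Δ j ≤ Δhi j) → (-(Jmat B C J2 J4 Δ κ2)).det < 0) :
    Microphase B C J2 J4 Δstar := by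
  obtain ⟨κ₀, hκ₀, hdet_pos⟩ := hInitPos
  obtain ⟨κ₁, hκ₁, hdet_neg⟩ := hPsiPlusNeg
  obtain ⟨κbar, -, hdef⟩ := hκbar
  obtain ⟨hsimple, hstable⟩ := hspec Δstar hΔstar
  have hJ : Tendsto (Jmat B C J2 J4 Δstar) (𝓝 0) (𝓝 (B * diagonal Δstar * C)) := by
    have hcont : Continuous (Jmat B C J2 J4 Δstar) := by unfold Jmat; fun_prop
    simpa [Jmat] using hcont.tendsto 0
  have hsmall : ∀ᶠ κ in 𝓝[>] 0, AllEigNegRe (Jmat B C J2 J4 Δstar κ) := by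
    filter_upwards [nhdsWithin_le_nhds (hJ.eventually (eventually_allEigNegRe hsimple hstable)),
      Ioo_mem_nhdsGT hκ₀] with κ hκ hκI using hκ (hdet_pos κ hκI.1 hκI.2)
  obtain ⟨κhat, hκhat, hIoo⟩ := mem_nhdsGT_iff_exists_Ioo_subset.1 hsmall
  obtain ⟨κ₂, hlarge, hκ₂⟩ := ((eventually_dotProduct_add_smul_add_smul_mulVec_neg
    (B * diagonal Δstar * C) J2 J4 hJ4nsd hdef).and (eventually_gt_atTop κ₁)).exists
  refine ⟨min κhat (κ₁ / 2), κ₁, κ₂, lt_min hκhat (half_pos hκ₁),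
    (min_le_right _ _).trans_lt (half_lt_self hκ₁), hκ₂,
    fun κ h₀ h₁ => hIoo ⟨h₀, h₁.trans_le (min_le_left _ _)⟩,
    someEigPosRe_of_det_neg (hdet_neg Δstar hΔstar), allEigNegRe_of_dotProduct_mulVec_neg hlarge⟩

/-- (Theorem 2, sufficient condition, `Ψ⁺` branch) Under the structural assumptions on
`J₂, J₄` and on the spectrum of `B ⬝ diag(Δ) ⬝ C` for all `Δ ∈ 𝒟`, if for some
`Δ* ∈ 𝒟` the function `κ ↦ det (-J(Δ*,κ))` is initially positive and there is
`κ₂ > 0` with `det (-J(Δ,κ₂)) < 0` for all `Δ ∈ 𝒟`, then `Δ*` exhibits microphase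
separation. -/
theorem stmt11 (n m : ℕ) (B : Matrix (Fin n) (Fin m) ℝ) (C : Matrix (Fin m) (Fin n) ℝ)
    (Δlo Δhi : Fin m → ℝ) (hbounds : ∀ j, 0 ≤ Δlo j ∧ Δlo j ≤ Δhi j)
    (J2 J4 : Matrix (Fin n) (Fin n) ℝ) (hJ2 : J2.IsSymm) (hJ4 : J4.IsSymm)
    (hJ4nsd : ∀ x : Fin n → ℝ, x ⬝ᵥ J4.mulVec x ≤ 0)
    (hκbar : ∃ κbar : ℝ, 0 < κbar ∧
      ∀ x : Fin n → ℝ, x ≠ 0 → x ⬝ᵥ (J2 + κbar ^ 2 • J4).mulVec x < 0)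
    (hspec : ∀ Δ : Fin m → ℝ, (∀ j, Δlo j ≤ Δ j ∧ Δ j ≤ Δhi j) →
      (((B * Matrix.diagonal Δ * C).charpoly).map (algebraMap ℝ ℂ)).rootMultiplicity 0 = 1 ∧
      (∀ z : ℂ, (((B * Matrix.diagonal Δ * C).charpoly).map (algebraMap ℝ ℂ)).IsRoot z →
        z ≠ 0 → z.re < 0))
    (Δstar : Fin m → ℝ) (hΔstar : ∀ j, Δlo j ≤ Δstar j ∧ Δstar j ≤ Δhi j)
    (hInitPos : ∃ κhat : ℝ, 0 < κhat ∧ ∀ κ : ℝ, 0 < κ → κ < κhat →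
      0 < (-(Jmat B C J2 J4 Δstar κ)).det)
    (hPsiPlusNeg : ∃ κ2 : ℝ, 0 < κ2 ∧ ∀ Δ : Fin m → ℝ,
      (∀ j, Δlo j ≤ Δ j ∧ Δ j ≤ Δhi j) → (-(Jmat B C J2 J4 Δ κ2)).det < 0) :
    Microphase B C J2 J4 Δstar :=
  stmt11_general n m B C Δlo Δhi J2 J4 hJ4nsd hκbar hspec Δstar hΔstar hInitPos hPsiPlusNeg
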